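/- In an IO-marked tile assembly system at temperature 2, every non-null glue exposed on the perimeter of any producible assembly has an output marking. -/

import Mathlib

/-!
STATEMENT 0: In an IO-marked tile assembly system at temperature 2, every non-null
glue exposed on the perimeter of any producible assembly has an output marking.
-/

inductive Dir | N | E | S | W
deriving DecidableEq

instance : Fintype Dir :=
  ⟨{.N, .E, .S, .W}, by intro d; cases d <;> decide⟩

def Dir.opp : Dir → Dir
  | .N => .S | .S => .N | .E => .W | .W => .E

def Dir.vec : Dir → ℤ × ℤ
  | .N => (0, 1) | .S => (0, -1) | .E => (1, 0) | .W => (-1, 0)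

structure Glue where
  label : String
  strength : ℕ
deriving DecidableEq

/-- A tile type: a glue on each of its 4 sides. -/
abbrev Tile := Dir → Glue

/-- A configuration: a partial arrangement of tiles on the plane. -/
abbrev Config := ℤ × ℤ → Option Tile

attribute [local instance] Classical.propDecidable

/-- `mark g = some d` means glue `g` bears the input marking for direction `d`
(which coincides with the output marking for the opposite direction `d.opp`);
`mark g = none` means `g` carries no marking. -/
def inputSides (mark : Glue → Option Dir) (t : Tile) : Finset Dir :=
  Finset.univ.filter (fun d => mark (t d) = some d)

/-- A tile is IO-marked (with a minimal input set): its input-marked glues are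
non-null and their strengths sum to at least 2, removing any input glue drops
the total input strength below 2, and every non-null glue is either input-marked
or output-marked. -/
def IOMarked (mark : Glue → Option Dir) (t : Tile) : Prop :=
  (∀ d ∈ inputSides mark t, (t d).strength ≠ 0) ∧
  2 ≤ ∑ d ∈ inputSides mark t, (t d).strength ∧
  (∀ d ∈ inputSides mark t, ∑ d' ∈ (inputSides mark t).erase d, (t d').strength < 2) ∧
  (∀ d, (t d).strength ≠ 0 → mark (t d) = some d ∨ mark (t d) = some d.opp)

/-- The sides of `t`, placed at `p`, whose (non-null) glues bind matching glues
of adjacent tiles of `α` (glues bind only when label and strength are equal). -/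
def boundSides (α : Config) (p : ℤ × ℤ) (t : Tile) : Finset Dir :=
  Finset.univ.filter (fun d =>
    (t d).strength ≠ 0 ∧ ∃ t', α (p + d.vec) = some t' ∧ t' d.opp = t d)

/-- Temperature-2 attachment: a tile of the tile set may attach at an empty
location if its bound glues have total strength at least 2. -/
def Attaches (T : Set Tile) (α : Config) (p : ℤ × ℤ) (t : Tile) : Prop :=
  t ∈ T ∧ α p = none ∧ 2 ≤ ∑ d ∈ boundSides α p t, (t d).strength

/-- Producible assemblies: reachable from the seed by single-tile attachments. -/
inductive Producible (T : Set Tile) (σ : Config) : Config → Prop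
  | seed : Producible T σ σ
  | attach {α : Config} {p : ℤ × ℤ} {t : Tile} :
      Producible T σ α → Attaches T α p t →
      Producible T σ (Function.update α p (some t))

/-- Every non-null glue exposed on the perimeter of `α` is output-marked. -/
def OutputMarkedPerimeter (mark : Glue → Option Dir) (α : Config) : Prop :=
  ∀ p t d, α p = some t → α (p + d.vec) = none → (t d).strength ≠ 0 →
    mark (t d) = some d.opp

/-!
Induct on the assembly sequence. When a tile `t` attaches at an empty site `p`, each glue of `t`
that binds binds an exposed glue of the assembly, which is output-marked by induction; the
matching glue of `t` therefore carries the input marking for its side. So the bound sides of `t`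
are among its input sides, and since they already reach strength 2, minimality of the input set
forces every input side of `t` to be bound. Hence the glues `t` leaves exposed are output-marked,
and the glues it covers drop off the perimeter.
-/

namespace Dir

@[simp]
theorem opp_opp (d : Dir) : d.opp.opp = d := by
  cases d <;> rfl

@[simp]
theorem add_vec_add_opp_vec (p : ℤ × ℤ) (d : Dir) : p + d.vec + d.opp.vec = p := by
  cases d <;> simp [vec, opp, Prod.ext_iff]

theorem add_vec_ne (p : ℤ × ℤ) (d : Dir) : p + d.vec ≠ p := by
  cases d <;> simp [vec, Prod.ext_iff]

end Dir

theorem Finset.superset_of_minimal_sum_le {ι M : Type*} [DecidableEq ι] [AddCommMonoid M]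
    [LinearOrder M] [IsOrderedAddMonoid M] [CanonicallyOrderedAdd M] {B I : Finset ι} {f : ι → M} {n : M}
    (hB : B ⊆ I) (hsum : n ≤ ∑ i ∈ B, f i) (hmin : ∀ i ∈ I, ∑ j ∈ I.erase i, f j < n) :
    I ⊆ B := by
  intro i hi
  by_contra hiB
  have hB' : B ⊆ I.erase i := fun j hj =>
    Finset.mem_erase.mpr ⟨fun h => hiB (h ▸ hj), hB hj⟩
  exact (hmin i hi).not_ge (hsum.trans (Finset.sum_le_sum_of_subset hB'))

section Attachment

variable {mark : Glue → Option Dir} {T : Set Tile} {α : Config} {p : ℤ × ℤ} {t : Tile}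

theorem boundSides_subset_inputSides (hα : OutputMarkedPerimeter mark α) (hp : α p = none) :
    boundSides α p t ⊆ inputSides mark t := by
  intro d hd
  simp only [boundSides, Finset.mem_filter, Finset.mem_univ, true_and] at hd
  obtain ⟨hs, t', ht', heq⟩ := hd
  have hout := hα (p + d.vec) t' d.opp ht' (by rwa [Dir.add_vec_add_opp_vec]) (heq ▸ hs)
  rw [heq, Dir.opp_opp] at hout
  simp [inputSides, hout]

theorem inputSides_subset_boundSides (hα : OutputMarkedPerimeter mark α)
    (hatt : Attaches T α p t) (ht : IOMarked mark t) :
    inputSides mark t ⊆ boundSides α p t :=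
  Finset.superset_of_minimal_sum_le (boundSides_subset_inputSides hα hatt.2.1) hatt.2.2 ht.2.2.1

theorem OutputMarkedPerimeter.update (hα : OutputMarkedPerimeter mark α)
    (hatt : Attaches T α p t) (ht : IOMarked mark t) :
    OutputMarkedPerimeter mark (Function.update α p (some t)) := by
  intro q s d hq hqd hs
  by_cases hqp : q = p
  · subst hqp
    obtain rfl : t = s := Option.some_injective _ (by simpa using hq)
    refine (ht.2.2.2 d hs).resolve_left fun hin => ?_
    have hd : d ∈ inputSides mark t := by simp [inputSides, hin]
    have hbound := inputSides_subset_boundSides hα hatt ht hd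
    simp only [boundSides, Finset.mem_filter, Finset.mem_univ, true_and] at hbound
    obtain ⟨-, s', hs', -⟩ := hbound
    rw [Function.update_of_ne (Dir.add_vec_ne q d), hs'] at hqd
    exact Option.some_ne_none _ hqd
  · rw [Function.update_of_ne hqp] at hq
    have hqd' : q + d.vec ≠ p := by
      rintro rfl
      simp at hqd
    rw [Function.update_of_ne hqd'] at hqd
    exact hα q s d hq hqd hs

end Attachment

/-- In an IO TAS (all tiles IO-marked with minimal input sets, and all non-null
glues on the seed perimeter output-marked), every non-null glue exposed on the
perimeter of any producible assembly has an output marking. -/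
theorem io_tas_perimeter_output_marked
    (mark : Glue → Option Dir) (T : Set Tile) (σ : Config)
    (hT : ∀ t ∈ T, IOMarked mark t)
    (hσ : OutputMarkedPerimeter mark σ) :
    ∀ α, Producible T σ α → OutputMarkedPerimeter mark α := by
  intro α hα
  induction hα with
  | seed => exact hσ
  | attach _ hatt ih => exact ih.update hatt (hT _ hatt.1)
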